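/- Let X = Xᴬ(x,v) ∂_A be a vertical vector field on E and define its lift X̂ = Xᴬ ∂_A − pᵛ_B ∂_A Xᴮ ∂ᴬ_ν on P. Then X̂ is a Hamiltonian vector field with Hamiltonian (n−1)-form I(X) = X̂ ⌟ Θ_Γ; explicitly, d_Γ̄ I(X) = X̂ ⌟ Ω_Γ. -/

import Mathlib

open Finset

/-- Points of (a chart of) the polysymplectic phase space `P`, with coordinates
`(xᵘ, vᴬ, pᵘ_A)`; the same type serves for tangent vectors expressed in the
Γ̄-adapted frame dual to the coframe `(dxᵘ, 𝔢ᴬ, 𝔢ᵘ_A)`. Here `n = m + 1`. -/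
abbrev PolyPt (m N : ℕ) :=
  (Fin (m + 1) → ℝ) × (Fin N → ℝ) × (Fin (m + 1) → Fin N → ℝ)

/-- The canonical `n`-form `Θ_Γ` on `P` (in the adapted coframe):
`Θ(X₁,…,Xₙ) = (1/n!) Σ_σ sgn(σ) dⁿx(α(vert X_{σ(1)}), hor X_{σ(2)}, …, hor X_{σ(n)})`,
where at `(x,v,p)` the map `α` sends a vertical vector `wᴬ∂_A` to `pᵘ_A wᴬ ∂_μ`. -/
noncomputable def thetaForm {m N : ℕ} (q : PolyPt m N)
    (V : Fin (m + 1) → PolyPt m N) : ℝ :=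
  (1 / ((m + 1).factorial : ℝ)) *
    ∑ σ : Equiv.Perm (Fin (m + 1)),
      ((Equiv.Perm.sign σ : ℤ) : ℝ) *
        Matrix.det (Matrix.of fun μ j =>
          if j = (0 : Fin (m + 1)) then
            ∑ A : Fin N, q.2.2 μ A * (V (σ 0)).2.1 A
          else (V (σ j)).1 μ)

/-- The Γ̄-vertical differential of a `k`-form (given in the adapted coframe):
`(d_Γ̄ F)(V₀,…,V_k) = Σ_i (−1)ⁱ ∂_{vert V_i} F(V₀,…,V̂_i,…,V_k)`, the derivative
being taken only in the vertical coordinate directions `(vᴬ, pᵘ_A)`. -/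
noncomputable def dVert {m N k : ℕ}
    (F : PolyPt m N → (Fin k → PolyPt m N) → ℝ) :
    PolyPt m N → (Fin (k + 1) → PolyPt m N) → ℝ :=
  fun q V => ∑ i : Fin (k + 1),
    (-1 : ℝ) ^ (i : ℕ) *
      fderiv ℝ (fun q' => F q' (fun j => V (i.succAbove j))) q
        (0, (V i).2.1, (V i).2.2)

/-- Contraction of a vector field with a `(k+1)`-form (in the first slot). -/
def contrVF {m N k : ℕ} (X : PolyPt m N → PolyPt m N)
    (F : PolyPt m N → (Fin (k + 1) → PolyPt m N) → ℝ) :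
    PolyPt m N → (Fin k → PolyPt m N) → ℝ :=
  fun q V => F q (Fin.cons (X q) V)

/-- The canonical lift `X̂ = Xᴬ∂_A − pᵛ_B ∂_A Xᴮ ∂ᴬ_ν` to `P` of a vertical
vector field `X = Xᴬ(x,v)∂_A` on `E`. -/
noncomputable def liftVF {m N : ℕ}
    (X : ((Fin (m + 1) → ℝ) × (Fin N → ℝ)) → (Fin N → ℝ)) :
    PolyPt m N → PolyPt m N :=
  fun q =>
    (0, X (q.1, q.2.1),
      fun ν A => -∑ B : Fin N,
        q.2.2 ν B * fderiv ℝ X (q.1, q.2.1) (0, Pi.single A 1) B)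

namespace LiftHam

variable {m N : ℕ}

/-- The `μ`-th minor (along column 0) of the matrix appearing in `thetaForm`. -/
noncomputable def minorK (W : Fin (m + 1) → PolyPt m N)
    (σ : Equiv.Perm (Fin (m + 1))) (μ : Fin (m + 1)) : ℝ :=
  Matrix.det (Matrix.of fun r c : Fin m => (W (σ c.succ)).1 (μ.succAbove r))

/-- Normal form of `thetaForm` obtained by Laplace expansion along column 0. -/
noncomputable def TT (p : Fin (m + 1) → Fin N → ℝ)
    (W : Fin (m + 1) → PolyPt m N) : ℝ :=
  (1 / ((m + 1).factorial : ℝ)) *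
    ∑ σ : Equiv.Perm (Fin (m + 1)), ((Equiv.Perm.sign σ : ℤ) : ℝ) *
      ∑ μ : Fin (m + 1), (-1 : ℝ) ^ (μ : ℕ) *
        ((∑ A : Fin N, p μ A * (W (σ 0)).2.1 A) * minorK W σ μ)

/-- The extra term appearing in the vertical derivative of the contracted form. -/
noncomputable def EX (q : PolyPt m N) (u : Fin N → ℝ)
    (W : Fin (m + 1) → PolyPt m N) : ℝ :=
  (1 / ((m + 1).factorial : ℝ)) *
    ∑ σ : Equiv.Perm (Fin (m + 1)), ((Equiv.Perm.sign σ : ℤ) : ℝ) *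
      ∑ μ : Fin (m + 1), (-1 : ℝ) ^ (μ : ℕ) *
        ((if σ 0 = 0 then ∑ A : Fin N, q.2.2 μ A * u A else 0) * minorK W σ μ)

lemma thetaForm_eq (q : PolyPt m N) (W : Fin (m + 1) → PolyPt m N) :
    thetaForm q W = TT q.2.2 W := by
  unfold thetaForm TT
  congr 1
  refine Finset.sum_congr rfl fun σ _ => ?_
  congr 1
  rw [Matrix.det_succ_column_zero]
  refine Finset.sum_congr rfl fun μ _ => ?_
  rw [mul_assoc]
  congr 1

/-- Projection onto the `p`-coordinate `pᵘ_A`, as a continuous linear map. -/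
noncomputable def pP (μ : Fin (m + 1)) (A : Fin N) : PolyPt m N →L[ℝ] ℝ :=
  (ContinuousLinearMap.proj A).comp ((ContinuousLinearMap.proj μ).comp
    ((ContinuousLinearMap.snd ℝ (Fin N → ℝ) (Fin (m + 1) → Fin N → ℝ)).comp
      (ContinuousLinearMap.snd ℝ (Fin (m + 1) → ℝ) _)))

@[simp] lemma pP_apply (μ : Fin (m + 1)) (A : Fin N) (w : PolyPt m N) :
    pP μ A w = w.2.2 μ A := rfl

/-- Projection onto the base coordinates `(x, v)`, as a continuous linear map. -/
noncomputable def eP : PolyPt m N →L[ℝ] (Fin (m + 1) → ℝ) × (Fin N → ℝ) :=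
  (ContinuousLinearMap.fst ℝ _ _).prod
    ((ContinuousLinearMap.fst ℝ (Fin N → ℝ) _).comp (ContinuousLinearMap.snd ℝ (Fin (m + 1) → ℝ) _))

@[simp] lemma eP_apply (w : PolyPt m N) : (eP w : (Fin (m + 1) → ℝ) × (Fin N → ℝ)) = (w.1, w.2.1) := rfl

section Calc

variable (X : ((Fin (m + 1) → ℝ) × (Fin N → ℝ)) → (Fin N → ℝ))

lemma minorK_lift_const (W : Fin m → PolyPt m N) (σ : Equiv.Perm (Fin (m + 1)))
    (μ : Fin (m + 1)) (q q' : PolyPt m N) :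
    minorK (Fin.cons (liftVF X q') W) σ μ = minorK (Fin.cons (liftVF X q) W) σ μ := by
  unfold minorK
  congr 1
  funext r c
  rcases Fin.eq_zero_or_eq_succ (σ c.succ) with h | ⟨k, h⟩ <;>
    simp [h, liftVF]

lemma fderiv_theta_const (W : Fin (m + 1) → PolyPt m N) (q w : PolyPt m N) :
    fderiv ℝ (fun q' => thetaForm q' W) q w = TT w.2.2 W := by
  have hF : HasFDerivAt (fun q' : PolyPt m N => thetaForm q' W)
      ((1 / ((m + 1).factorial : ℝ)) • ∑ σ : Equiv.Perm (Fin (m + 1)),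
        ((Equiv.Perm.sign σ : ℤ) : ℝ) • ∑ μ : Fin (m + 1), ((-1 : ℝ) ^ (μ : ℕ)) •
          (minorK W σ μ • ∑ A : Fin N, ((W (σ 0)).2.1 A) • pP μ A)) q := by
    have h0 : (fun q' : PolyPt m N => thetaForm q' W) = fun q' : PolyPt m N =>
        (1 / ((m + 1).factorial : ℝ)) * ∑ σ : Equiv.Perm (Fin (m + 1)),
          ((Equiv.Perm.sign σ : ℤ) : ℝ) * ∑ μ : Fin (m + 1), (-1 : ℝ) ^ (μ : ℕ) *
            ((∑ A : Fin N, q'.2.2 μ A * (W (σ 0)).2.1 A) * minorK W σ μ) := by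
      funext q'
      rw [thetaForm_eq]
      rfl
    rw [h0]
    refine HasFDerivAt.const_mul ?_ _
    refine HasFDerivAt.fun_sum fun σ _ => ?_
    refine HasFDerivAt.const_mul ?_ _
    refine HasFDerivAt.fun_sum fun μ _ => ?_
    refine HasFDerivAt.const_mul ?_ _
    refine HasFDerivAt.mul_const ?_ _
    exact HasFDerivAt.fun_sum fun A _ => (pP μ A).hasFDerivAt.mul_const _
  rw [hF.fderiv]
  simp only [ContinuousLinearMap.smul_apply, ContinuousLinearMap.sum_apply, pP_apply,
    smul_eq_mul]
  unfold TT
  congr 1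
  refine Finset.sum_congr rfl fun σ _ => ?_
  congr 1
  refine Finset.sum_congr rfl fun μ _ => ?_
  congr 1
  rw [mul_comm]
  congr 1
  exact Finset.sum_congr rfl fun A _ => mul_comm _ _

lemma fderiv_theta_lift (hX : ContDiff ℝ (⊤ : ℕ∞) X) (W : Fin m → PolyPt m N)
    (q w : PolyPt m N) :
    fderiv ℝ (fun q' => thetaForm q' (Fin.cons (liftVF X q') W)) q w =
      TT w.2.2 (Fin.cons (liftVF X q) W) +
        EX q (fun A => fderiv ℝ X (q.1, q.2.1) (w.1, w.2.1) A)
          (Fin.cons (liftVF X q) W) := by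
  have hXA : ∀ A : Fin N, HasFDerivAt (fun q' : PolyPt m N => X (q'.1, q'.2.1) A)
      ((ContinuousLinearMap.proj A).comp ((fderiv ℝ X (q.1, q.2.1)).comp eP)) q := by
    intro A
    have h1 : HasFDerivAt X (fderiv ℝ X (q.1, q.2.1)) (q.1, q.2.1) :=
      (hX.differentiable (by simp) (q.1, q.2.1)).hasFDerivAt
    have h2 : HasFDerivAt (fun q' : PolyPt m N => (q'.1, q'.2.1))
        (eP : PolyPt m N →L[ℝ] (Fin (m + 1) → ℝ) × (Fin N → ℝ)) q := eP.hasFDerivAt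
    have h3 := h1.comp q h2
    exact ((ContinuousLinearMap.proj A).hasFDerivAt).comp q h3
  set D : Equiv.Perm (Fin (m + 1)) → Fin (m + 1) → (PolyPt m N →L[ℝ] ℝ) :=
    fun σ μ =>
      (∑ A : Fin N, (((Fin.cons (liftVF X q) W : Fin (m + 1) → PolyPt m N) (σ 0)).2.1 A) • pP μ A) +
      (if σ 0 = 0 then
        ∑ A : Fin N, (q.2.2 μ A) •
          ((ContinuousLinearMap.proj A).comp ((fderiv ℝ X (q.1, q.2.1)).comp eP))
      else 0) with hD
  have hInner : ∀ (σ : Equiv.Perm (Fin (m + 1))) (μ : Fin (m + 1)),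
      HasFDerivAt (fun q' : PolyPt m N =>
        ∑ A : Fin N, q'.2.2 μ A * ((Fin.cons (liftVF X q') W : Fin (m + 1) → PolyPt m N) (σ 0)).2.1 A)
        (D σ μ) q := by
    intro σ μ
    by_cases h : σ 0 = 0
    · have hfun : (fun q' : PolyPt m N =>
          ∑ A : Fin N, q'.2.2 μ A * ((Fin.cons (liftVF X q') W : Fin (m + 1) → PolyPt m N) (σ 0)).2.1 A)
          = fun q' : PolyPt m N => ∑ A : Fin N, q'.2.2 μ A * X (q'.1, q'.2.1) A := by
        funext q'
        refine Finset.sum_congr rfl fun A _ => ?_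
        rw [h, Fin.cons_zero]
        rfl
      rw [hfun]
      have hDval : D σ μ =
          ∑ A : Fin N, ((q.2.2 μ A) •
            ((ContinuousLinearMap.proj A).comp ((fderiv ℝ X (q.1, q.2.1)).comp eP))
            + (X (q.1, q.2.1) A) • pP μ A) := by
        simp only [hD]
        rw [if_pos h]
        have hcc : (∑ A : Fin N,
              ((Fin.cons (liftVF X q) W : Fin (m + 1) → PolyPt m N) (σ 0)).2.1 A • pP μ A)
            = ∑ A : Fin N, (X (q.1, q.2.1) A) • pP μ A := by
          refine Finset.sum_congr rfl fun A _ => ?_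
          rw [h, Fin.cons_zero]
          rfl
        rw [hcc, Finset.sum_add_distrib]
        exact add_comm _ _
      rw [hDval]
      exact HasFDerivAt.fun_sum fun A _ => (pP μ A).hasFDerivAt.mul (hXA A)
    · obtain ⟨k, hk⟩ := Fin.exists_succ_eq.mpr h
      have hfun : (fun q' : PolyPt m N =>
          ∑ A : Fin N, q'.2.2 μ A * ((Fin.cons (liftVF X q') W : Fin (m + 1) → PolyPt m N) (σ 0)).2.1 A)
          = fun q' : PolyPt m N => ∑ A : Fin N, q'.2.2 μ A * (W k).2.1 A := by
        funext q'
        refine Finset.sum_congr rfl fun A _ => ?_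
        rw [← hk, Fin.cons_succ]
      rw [hfun]
      have hDval : D σ μ = ∑ A : Fin N, ((W k).2.1 A) • pP μ A := by
        simp only [hD]
        rw [if_neg h, add_zero]
        refine Finset.sum_congr rfl fun A _ => ?_
        rw [← hk, Fin.cons_succ]
      rw [hDval]
      exact HasFDerivAt.fun_sum fun A _ => (pP μ A).hasFDerivAt.mul_const _
  have hF : HasFDerivAt (fun q' => thetaForm q' (Fin.cons (liftVF X q') W))
      ((1 / ((m + 1).factorial : ℝ)) • ∑ σ : Equiv.Perm (Fin (m + 1)),
        ((Equiv.Perm.sign σ : ℤ) : ℝ) • ∑ μ : Fin (m + 1), ((-1 : ℝ) ^ (μ : ℕ)) •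
          ((minorK (Fin.cons (liftVF X q) W) σ μ) • D σ μ)) q := by
    have h0 : (fun q' => thetaForm q' (Fin.cons (liftVF X q') W)) = fun q' : PolyPt m N =>
        (1 / ((m + 1).factorial : ℝ)) * ∑ σ : Equiv.Perm (Fin (m + 1)),
          ((Equiv.Perm.sign σ : ℤ) : ℝ) * ∑ μ : Fin (m + 1), (-1 : ℝ) ^ (μ : ℕ) *
            ((∑ A : Fin N, q'.2.2 μ A *
                ((Fin.cons (liftVF X q') W : Fin (m + 1) → PolyPt m N) (σ 0)).2.1 A) *
              minorK (Fin.cons (liftVF X q) W) σ μ) := by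
      funext q'
      rw [thetaForm_eq]
      unfold TT
      congr 1
      refine Finset.sum_congr rfl fun σ _ => ?_
      congr 1
      refine Finset.sum_congr rfl fun μ _ => ?_
      rw [minorK_lift_const X W σ μ q q']
    rw [h0]
    refine HasFDerivAt.const_mul ?_ _
    refine HasFDerivAt.fun_sum fun σ _ => ?_
    refine HasFDerivAt.const_mul ?_ _
    refine HasFDerivAt.fun_sum fun μ _ => ?_
    refine HasFDerivAt.const_mul ?_ _
    exact (hInner σ μ).mul_const _
  rw [hF.fderiv]
  simp only [ContinuousLinearMap.smul_apply, ContinuousLinearMap.sum_apply,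
    ContinuousLinearMap.add_apply, pP_apply, smul_eq_mul, hD]
  unfold TT EX
  rw [← mul_add, ← Finset.sum_add_distrib, mul_eq_mul_left_iff]
  left
  refine Finset.sum_congr rfl fun σ _ => ?_
  rw [← mul_add, ← Finset.sum_add_distrib, mul_eq_mul_left_iff]
  left
  refine Finset.sum_congr rfl fun μ _ => ?_
  rw [← mul_add, ← add_mul, mul_eq_mul_left_iff]
  left
  rw [mul_comm]
  congr 1
  · congr 1
    · exact Finset.sum_congr rfl fun A _ => mul_comm _ _
    · rw [apply_ite (fun (f : PolyPt m N →L[ℝ] ℝ) => f w)]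
      by_cases h : σ 0 = 0
      · rw [if_pos h, if_pos h, ContinuousLinearMap.sum_apply]
        refine Finset.sum_congr rfl fun A _ => ?_
        simp
      · rw [if_neg h, if_neg h]
        rfl

lemma fderiv_single_expand (hX : ContDiff ℝ (⊤ : ℕ∞) X)
    (z : (Fin (m + 1) → ℝ) × (Fin N → ℝ)) (b : Fin N → ℝ) (B : Fin N) :
    fderiv ℝ X z ((0 : Fin (m + 1) → ℝ), b) B =
      ∑ A : Fin N, b A * fderiv ℝ X z (0, Pi.single A 1) B := by
  have hone : ∀ A : Fin N, (b A) • (((0 : Fin (m + 1) → ℝ), Pi.single A (1 : ℝ)) :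
      (Fin (m + 1) → ℝ) × (Fin N → ℝ)) = (0, Pi.single A (b A)) := by
    intro A
    rw [Prod.smul_mk, smul_zero]
    congr 1
    ext C
    simp [Pi.single_apply]
  have hb : ((0 : Fin (m + 1) → ℝ), b) =
      ∑ A : Fin N, b A • (((0 : Fin (m + 1) → ℝ), Pi.single A (1 : ℝ)) :
        (Fin (m + 1) → ℝ) × (Fin N → ℝ)) := by
    simp only [hone]
    rw [Prod.ext_iff]
    refine ⟨by rw [Prod.fst_sum]; simp, ?_⟩
    rw [Prod.snd_sum]
    simp [Finset.univ_sum_single]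
  rw [hb, map_sum, Finset.sum_apply]
  refine Finset.sum_congr rfl fun A _ => ?_
  rw [map_smul]
  simp

lemma minorK_cycle (q : PolyPt m N) (V : Fin (m + 1) → PolyPt m N)
    (i : Fin (m + 1)) (ρ : Equiv.Perm (Fin (m + 1))) (μ : Fin (m + 1))
    (h : ρ 0 = i) :
    minorK (Fin.cons (liftVF X q) (fun j => V (i.succAbove j)))
      (i.cycleRange * ρ) μ = minorK V ρ μ := by
  unfold minorK
  congr 1
  funext r c
  simp only [Matrix.of_apply]
  have hne : ρ c.succ ≠ i := by
    rw [← h]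
    exact fun hc => (Fin.succ_ne_zero c) (ρ.injective hc)
  obtain ⟨k, hk⟩ := Fin.exists_succAbove_eq hne
  have hcomp : (i.cycleRange * ρ) c.succ = i.cycleRange (ρ c.succ) := rfl
  rw [hcomp, ← hk, Fin.cycleRange_succAbove, Fin.cons_succ]

lemma core_identity (hX : ContDiff ℝ (⊤ : ℕ∞) X) (q : PolyPt m N)
    (V : Fin (m + 1) → PolyPt m N) :
    ∑ i : Fin (m + 1), (-1 : ℝ) ^ (i : ℕ) *
        EX q (fun A => fderiv ℝ X (q.1, q.2.1) ((0 : Fin (m + 1) → ℝ), (V i).2.1) A)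
          (Fin.cons (liftVF X q) (fun j => V (i.succAbove j))) =
      -(TT (liftVF X q).2.2 V) := by
  have hcL : ∀ (μ : Fin (m + 1)) (v : Fin N → ℝ),
      -(∑ A : Fin N, (liftVF X q).2.2 μ A * v A) =
      ∑ B : Fin N, q.2.2 μ B * fderiv ℝ X (q.1, q.2.1) ((0 : Fin (m + 1) → ℝ), v) B := by
    intro μ v
    calc -(∑ A : Fin N, (liftVF X q).2.2 μ A * v A)
        = ∑ A : Fin N, ∑ B : Fin N,
            q.2.2 μ B * fderiv ℝ X (q.1, q.2.1) (0, Pi.single A 1) B * v A := by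
          rw [← Finset.sum_neg_distrib]
          refine Finset.sum_congr rfl fun A _ => ?_
          show -((-∑ B : Fin N,
              q.2.2 μ B * fderiv ℝ X (q.1, q.2.1) (0, Pi.single A 1) B) * v A) = _
          rw [neg_mul, neg_neg, Finset.sum_mul]
      _ = ∑ B : Fin N, ∑ A : Fin N,
            q.2.2 μ B * fderiv ℝ X (q.1, q.2.1) (0, Pi.single A 1) B * v A :=
          Finset.sum_comm
      _ = ∑ B : Fin N, q.2.2 μ B *
            fderiv ℝ X (q.1, q.2.1) ((0 : Fin (m + 1) → ℝ), v) B := by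
          refine Finset.sum_congr rfl fun B _ => ?_
          rw [fderiv_single_expand X hX (q.1, q.2.1) v B, Finset.mul_sum]
          refine Finset.sum_congr rfl fun A _ => ?_
          ring
  have hRHS : -(TT (liftVF X q).2.2 V) =
      (1 / ((m + 1).factorial : ℝ)) *
        ∑ ρ : Equiv.Perm (Fin (m + 1)), ((Equiv.Perm.sign ρ : ℤ) : ℝ) *
          ∑ μ : Fin (m + 1), (-1 : ℝ) ^ (μ : ℕ) *
            ((∑ B : Fin N, q.2.2 μ B *
                fderiv ℝ X (q.1, q.2.1) ((0 : Fin (m + 1) → ℝ), (V (ρ 0)).2.1) B) *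
              minorK V ρ μ) := by
    unfold TT
    rw [← mul_neg, ← Finset.sum_neg_distrib]
    congr 1
    refine Finset.sum_congr rfl fun ρ _ => ?_
    rw [← mul_neg, ← Finset.sum_neg_distrib]
    congr 1
    refine Finset.sum_congr rfl fun μ _ => ?_
    rw [← mul_neg, ← neg_mul, hcL μ (V (ρ 0)).2.1]
  have hterm : ∀ i : Fin (m + 1),
      (-1 : ℝ) ^ (i : ℕ) *
        EX q (fun A => fderiv ℝ X (q.1, q.2.1) ((0 : Fin (m + 1) → ℝ), (V i).2.1) A)
          (Fin.cons (liftVF X q) (fun j => V (i.succAbove j))) =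
      (1 / ((m + 1).factorial : ℝ)) *
        ∑ ρ : Equiv.Perm (Fin (m + 1)), (if ρ 0 = i then
          ((Equiv.Perm.sign ρ : ℤ) : ℝ) *
            ∑ μ : Fin (m + 1), (-1 : ℝ) ^ (μ : ℕ) *
              ((∑ A : Fin N, q.2.2 μ A *
                  fderiv ℝ X (q.1, q.2.1) ((0 : Fin (m + 1) → ℝ), (V i).2.1) A) *
                minorK V ρ μ) else 0) := by
    intro i
    have hone : (-1 : ℝ) ^ (i : ℕ) * (-1 : ℝ) ^ (i : ℕ) = 1 := by
      rw [← pow_add]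
      exact Even.neg_one_pow ⟨(i : ℕ), rfl⟩
    unfold EX
    rw [mul_left_comm]
    congr 1
    rw [Finset.mul_sum]
    rw [← Equiv.sum_comp (Equiv.mulLeft i.cycleRange)
      (fun σ : Equiv.Perm (Fin (m + 1)) => (-1 : ℝ) ^ (i : ℕ) *
        (((Equiv.Perm.sign σ : ℤ) : ℝ) *
          ∑ μ : Fin (m + 1), (-1 : ℝ) ^ (μ : ℕ) *
            ((if σ 0 = 0 then ∑ A : Fin N, q.2.2 μ A *
                fderiv ℝ X (q.1, q.2.1) ((0 : Fin (m + 1) → ℝ), (V i).2.1) A else 0) *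
              minorK (Fin.cons (liftVF X q) (fun j => V (i.succAbove j))) σ μ)))]
    refine Finset.sum_congr rfl fun ρ _ => ?_
    simp only [Equiv.coe_mulLeft]
    have hsgn : ((Equiv.Perm.sign (i.cycleRange * ρ) : ℤ) : ℝ) =
        (-1 : ℝ) ^ (i : ℕ) * ((Equiv.Perm.sign ρ : ℤ) : ℝ) := by
      rw [map_mul, Fin.sign_cycleRange]
      push_cast
      ring
    have hcond : (i.cycleRange * ρ) 0 = 0 ↔ ρ 0 = i := by
      have h1 : (i.cycleRange * ρ) 0 = i.cycleRange (ρ 0) := rfl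
      rw [h1, ← Fin.cycleRange_self i]
      exact EmbeddingLike.apply_eq_iff_eq _
    by_cases hρ : ρ 0 = i
    · have hS : (∑ μ : Fin (m + 1), (-1 : ℝ) ^ (μ : ℕ) *
          ((if (i.cycleRange * ρ) 0 = 0 then ∑ A : Fin N, q.2.2 μ A *
              fderiv ℝ X (q.1, q.2.1) ((0 : Fin (m + 1) → ℝ), (V i).2.1) A else 0) *
            minorK (Fin.cons (liftVF X q) (fun j => V (i.succAbove j)))
              (i.cycleRange * ρ) μ)) =
          ∑ μ : Fin (m + 1), (-1 : ℝ) ^ (μ : ℕ) *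
            ((∑ A : Fin N, q.2.2 μ A *
                fderiv ℝ X (q.1, q.2.1) ((0 : Fin (m + 1) → ℝ), (V i).2.1) A) *
              minorK V ρ μ) := by
        refine Finset.sum_congr rfl fun μ _ => ?_
        rw [if_pos (hcond.mpr hρ), minorK_cycle X q V i ρ μ hρ]
      erw [hS]
      rw [if_pos hρ, hsgn, ← mul_assoc, ← mul_assoc, hone, one_mul]
    · have hS : (∑ μ : Fin (m + 1), (-1 : ℝ) ^ (μ : ℕ) *
          ((if (i.cycleRange * ρ) 0 = 0 then ∑ A : Fin N, q.2.2 μ A *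
              fderiv ℝ X (q.1, q.2.1) ((0 : Fin (m + 1) → ℝ), (V i).2.1) A else 0) *
            minorK (Fin.cons (liftVF X q) (fun j => V (i.succAbove j)))
              (i.cycleRange * ρ) μ)) = 0 := by
        refine Finset.sum_eq_zero fun μ _ => ?_
        rw [if_neg (fun h => hρ (hcond.mp h)), zero_mul, mul_zero]
      erw [hS]
      rw [if_neg hρ, mul_zero, mul_zero]
  calc (∑ i : Fin (m + 1), (-1 : ℝ) ^ (i : ℕ) *
        EX q (fun A => fderiv ℝ X (q.1, q.2.1) ((0 : Fin (m + 1) → ℝ), (V i).2.1) A)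
          (Fin.cons (liftVF X q) (fun j => V (i.succAbove j))))
      = ∑ i : Fin (m + 1), (1 / ((m + 1).factorial : ℝ)) *
          ∑ ρ : Equiv.Perm (Fin (m + 1)), (if ρ 0 = i then
            ((Equiv.Perm.sign ρ : ℤ) : ℝ) *
              ∑ μ : Fin (m + 1), (-1 : ℝ) ^ (μ : ℕ) *
                ((∑ A : Fin N, q.2.2 μ A *
                    fderiv ℝ X (q.1, q.2.1) ((0 : Fin (m + 1) → ℝ), (V i).2.1) A) *
                  minorK V ρ μ) else 0) :=
        Finset.sum_congr rfl fun i _ => hterm i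
    _ = (1 / ((m + 1).factorial : ℝ)) * ∑ i : Fin (m + 1),
          ∑ ρ : Equiv.Perm (Fin (m + 1)), (if ρ 0 = i then
            ((Equiv.Perm.sign ρ : ℤ) : ℝ) *
              ∑ μ : Fin (m + 1), (-1 : ℝ) ^ (μ : ℕ) *
                ((∑ A : Fin N, q.2.2 μ A *
                    fderiv ℝ X (q.1, q.2.1) ((0 : Fin (m + 1) → ℝ), (V i).2.1) A) *
                  minorK V ρ μ) else 0) := by
        rw [Finset.mul_sum]
    _ = (1 / ((m + 1).factorial : ℝ)) * ∑ ρ : Equiv.Perm (Fin (m + 1)),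
          ∑ i : Fin (m + 1), (if ρ 0 = i then
            ((Equiv.Perm.sign ρ : ℤ) : ℝ) *
              ∑ μ : Fin (m + 1), (-1 : ℝ) ^ (μ : ℕ) *
                ((∑ A : Fin N, q.2.2 μ A *
                    fderiv ℝ X (q.1, q.2.1) ((0 : Fin (m + 1) → ℝ), (V i).2.1) A) *
                  minorK V ρ μ) else 0) := by
        rw [Finset.sum_comm]
    _ = -(TT (liftVF X q).2.2 V) := by
        rw [hRHS]
        congr 1
        refine Finset.sum_congr rfl fun ρ _ => ?_
        rw [Finset.sum_ite_eq]
        simp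

end Calc

end LiftHam

/-- For a vertical vector field `X = Xᴬ(x,v)∂_A` on `E` with lift
`X̂ = Xᴬ∂_A − pᵛ_B ∂_A Xᴮ ∂ᴬ_ν` to `P`, the `(n−1)`-form `I(X) = X̂ ⌟ Θ_Γ` is a
Hamiltonian form with Hamiltonian vector field `X̂`:
`d_Γ̄ I(X) = X̂ ⌟ Ω_Γ`, where `Ω_Γ = −d_Γ̄ Θ_Γ`. -/
theorem lift_is_hamiltonian {m N : ℕ}
    (X : ((Fin (m + 1) → ℝ) × (Fin N → ℝ)) → (Fin N → ℝ))
    (hX : ContDiff ℝ (⊤ : ℕ∞) X) :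
    ∀ (q : PolyPt m N) (V : Fin (m + 1) → PolyPt m N),
      dVert (contrVF (liftVF X) thetaForm) q V =
        contrVF (liftVF X) (fun q' V' => -(dVert thetaForm q' V')) q V := by
  intro q V
  have hLHS : dVert (contrVF (liftVF X) thetaForm) q V =
      ∑ i : Fin (m + 1), (-1 : ℝ) ^ (i : ℕ) *
        (LiftHam.TT (V i).2.2 (Fin.cons (liftVF X q) (fun j => V (i.succAbove j))) +
         LiftHam.EX q
           (fun A => fderiv ℝ X (q.1, q.2.1) ((0 : Fin (m + 1) → ℝ), (V i).2.1) A)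
           (Fin.cons (liftVF X q) (fun j => V (i.succAbove j)))) := by
    unfold dVert contrVF
    refine Finset.sum_congr rfl fun i _ => ?_
    congr 1
    exact LiftHam.fderiv_theta_lift X hX (fun j => V (i.succAbove j)) q
      (0, (V i).2.1, (V i).2.2)
  have hRHS : contrVF (liftVF X) (fun q' V' => -(dVert thetaForm q' V')) q V =
      -(LiftHam.TT (liftVF X q).2.2 V +
        ∑ j : Fin (m + 1), (-1 : ℝ) ^ ((j : ℕ) + 1) *
          LiftHam.TT (V j).2.2 (Fin.cons (liftVF X q) (fun k => V (j.succAbove k)))) := by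
    show -(dVert thetaForm q (Fin.cons (liftVF X q) V)) = _
    congr 1
    unfold dVert
    rw [Fin.sum_univ_succ]
    congr 1
    · have hW0 : (fun j : Fin (m + 1) =>
          (Fin.cons (liftVF X q) V : Fin (m + 2) → PolyPt m N)
            ((0 : Fin (m + 2)).succAbove j)) = V := by
        funext j
        rw [Fin.succAbove_zero, Fin.cons_succ]
      simp only [Fin.val_zero, pow_zero, one_mul, Fin.cons_zero, hW0]
      exact LiftHam.fderiv_theta_const V q
        (0, (liftVF X q).2.1, (liftVF X q).2.2)
    · refine Finset.sum_congr rfl fun j _ => ?_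
      have hWj : (fun k : Fin (m + 1) =>
          (Fin.cons (liftVF X q) V : Fin (m + 2) → PolyPt m N)
            ((j.succ : Fin (m + 2)).succAbove k)) =
          (Fin.cons (liftVF X q) (fun k => V (j.succAbove k)) :
            Fin (m + 1) → PolyPt m N) := by
        funext k
        refine Fin.cases ?_ (fun t => ?_) k
        · rw [Fin.succ_succAbove_zero, Fin.cons_zero, Fin.cons_zero]
        · rw [Fin.succ_succAbove_succ, Fin.cons_succ, Fin.cons_succ]
      simp only [Fin.cons_succ, Fin.val_succ, hWj]
      congr 1
      exact LiftHam.fderiv_theta_const _ q (0, (V j).2.1, (V j).2.2)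
  rw [hLHS, hRHS]
  have hcore := LiftHam.core_identity X hX q V
  simp only [mul_add, Finset.sum_add_distrib]
  rw [hcore]
  have hsgnsum : ∑ j : Fin (m + 1), (-1 : ℝ) ^ ((j : ℕ) + 1) *
      LiftHam.TT (V j).2.2 (Fin.cons (liftVF X q) (fun k => V (j.succAbove k))) =
      -∑ j : Fin (m + 1), (-1 : ℝ) ^ (j : ℕ) *
        LiftHam.TT (V j).2.2 (Fin.cons (liftVF X q) (fun k => V (j.succAbove k))) := by
    rw [← Finset.sum_neg_distrib]
    refine Finset.sum_congr rfl fun j _ => ?_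
    rw [pow_succ]
    ring
  rw [hsgnsum]
  ring
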